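/- The complete bipartite graph K_{s,t} with 3 ≤ s ≤ t is γ-2-critical: subdividing any 2 edges increases the domination number, while subdividing a single edge need not. -/

import Mathlib

/-!
We have `γ(K_{s,t}) = 2`. After subdividing some edges, a dominating set with at most two
vertices must meet both sides: if it misses one side, each of its vertices dominates at most one
vertex of the other side, which has at least three vertices. So it is `{a, b}` with `a`, `b` on
opposite sides. The subdivision vertex of a subdivided edge forces that edge to contain `a` or
`b`, and a subdivided edge `ab'` with `b' ≠ b` would leave `b'` undominated (symmetrically for
`a'b`), so `ab` is the only edge that can be subdivided. Hence subdividing two edges raises the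
domination number to at least 3, while after subdividing `ab` alone `{a, b}` still dominates.
-/

open SimpleGraph

/-- `D` is a dominating set of `G`. -/
def SimpleGraph.IsDomSet {V : Type*} (G : SimpleGraph V) (D : Set V) : Prop :=
  ∀ v ∉ D, ∃ u ∈ D, G.Adj u v

/-- The domination number of `G`. -/
noncomputable def SimpleGraph.domNum {V : Type*} [Fintype V] (G : SimpleGraph V) : ℕ :=
  sInf {k | ∃ D : Finset V, D.card = k ∧ G.IsDomSet ↑D}

/-- The graph obtained from `G` by subdividing each edge in `F` once: each `e ∈ F`
contributes a new vertex adjacent to the two endpoints of `e`, and the edges of `F`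
are removed. -/
def SimpleGraph.subdiv {V : Type*} (G : SimpleGraph V) (F : Finset (Sym2 V)) :
    SimpleGraph (V ⊕ {e : Sym2 V // e ∈ F}) :=
  SimpleGraph.fromRel (fun a b => match a, b with
    | Sum.inl u, Sum.inl v => G.Adj u v ∧ s(u, v) ∉ F
    | Sum.inl u, Sum.inr e => u ∈ (e : Sym2 V)
    | _, _ => False)

/-- `G` is `γ`-`q`-critical: subdividing any `q` edges increases the domination number,
while some set of `q - 1` edges can be subdivided without increasing it. -/
def SimpleGraph.IsQCritical {V : Type*} [Fintype V] (G : SimpleGraph V) (q : ℕ) : Prop :=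
  (∀ F : Finset (Sym2 V), ↑F ⊆ G.edgeSet → F.card = q →
      G.domNum < (G.subdiv F).domNum) ∧
  (∃ F : Finset (Sym2 V), ↑F ⊆ G.edgeSet ∧ F.card = q - 1 ∧
      (G.subdiv F).domNum = G.domNum)

namespace SimpleGraph

section Domination

variable {V : Type*} [Fintype V] {G : SimpleGraph V}

lemma domNum_le_card {D : Finset V} (hD : G.IsDomSet ↑D) : G.domNum ≤ D.card :=
  Nat.sInf_le ⟨D, rfl, hD⟩

lemma le_domNum {n : ℕ} (h : ∀ D : Finset V, G.IsDomSet ↑D → n ≤ D.card) :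
    n ≤ G.domNum := by
  obtain ⟨D, hDcard, hD⟩ : G.domNum ∈ {k | ∃ D : Finset V, D.card = k ∧ G.IsDomSet ↑D} :=
    Nat.sInf_mem ⟨_, Finset.univ, rfl, fun v hv => (hv (Finset.mem_coe.2 (Finset.mem_univ v))).elim⟩
  exact hDcard ▸ h D hD

lemma two_le_domNum [Nonempty V] (h : ∀ u, ∃ v, v ≠ u ∧ ¬ G.Adj u v) : 2 ≤ G.domNum := by
  refine le_domNum fun D hD => ?_
  by_contra! hcard
  obtain hD0 | hD1 : D.card = 0 ∨ D.card = 1 := by omega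
  · obtain ⟨u, hu, -⟩ := hD (Classical.arbitrary V) (by simp_all)
    simp_all
  · obtain ⟨u, rfl⟩ := Finset.card_eq_one.1 hD1
    obtain ⟨v, hvu, hnadj⟩ := h u
    obtain ⟨w, hw, hadj⟩ := hD v (by simpa using hvu)
    rw [Finset.coe_singleton, Set.mem_singleton_iff] at hw
    exact hnadj (hw ▸ hadj)

end Domination

section Subdivision

variable {V : Type*} {G : SimpleGraph V} {F : Finset (Sym2 V)}

@[simp]
lemma subdiv_adj_inl_inl {u v : V} :
    (G.subdiv F).Adj (.inl u) (.inl v) ↔ G.Adj u v ∧ s(u, v) ∉ F := by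
  simp only [subdiv, fromRel_adj, ne_eq, Sum.inl.injEq]
  constructor
  · rintro ⟨-, h | ⟨h, h'⟩⟩
    · exact h
    · exact ⟨h.symm, Sym2.eq_swap ▸ h'⟩
  · rintro ⟨h, h'⟩
    exact ⟨h.ne, .inl ⟨h, h'⟩⟩

@[simp]
lemma subdiv_adj_inl_inr {u : V} {e : {e // e ∈ F}} :
    (G.subdiv F).Adj (.inl u) (.inr e) ↔ u ∈ e.1 := by
  simp [subdiv]

@[simp]
lemma subdiv_adj_inr_inl {u : V} {e : {e // e ∈ F}} :
    (G.subdiv F).Adj (.inr e) (.inl u) ↔ u ∈ e.1 := by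
  simp [subdiv]

@[simp]
lemma not_subdiv_adj_inr_inr {e e' : {e // e ∈ F}} : ¬ (G.subdiv F).Adj (.inr e) (.inr e') := by
  simp [subdiv]

/-- A vertex of `S` outside `D` can only be dominated through a subdivision vertex on one of its
edges, and since `S` is independent such a vertex serves at most one vertex of `S`. -/
lemma card_le_card_of_isDomSet_subdiv (hF : ↑F ⊆ G.edgeSet) {S : Finset V}
    (hS : G.IsIndepSet ↑S) {D : Finset (V ⊕ {e // e ∈ F})} (hD : (G.subdiv F).IsDomSet ↑D)
    (hDS : ∀ u, ∀ v ∈ S, G.Adj u v → .inl u ∉ D) : S.card ≤ D.card := by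
  have hcover : ∀ v ∈ S, ∃ d ∈ D, d = .inl v ∨ ∃ e : {e // e ∈ F}, d = .inr e ∧ v ∈ e.1 := by
    intro v hv
    by_cases hvD : .inl v ∈ D
    · exact ⟨_, hvD, .inl rfl⟩
    obtain ⟨u | e, hd, hadj⟩ := hD _ (Finset.mem_coe.not.2 hvD)
    · exact absurd hd (hDS u v hv (subdiv_adj_inl_inl.1 hadj).1)
    · exact ⟨_, hd, .inr ⟨e, rfl, subdiv_adj_inr_inl.1 hadj⟩⟩
  choose! f hfD hfcover using hcover
  refine Finset.card_le_card_of_injOn f hfD fun v hv w hw hfvw => ?_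
  by_contra hvw
  rcases hfcover v hv with hfv | ⟨e, hfv, hve⟩ <;>
    rcases hfcover w hw with hfw | ⟨e', hfw, hwe'⟩ <;> rw [hfv, hfw] at hfvw
  · exact hvw (Sum.inl_injective hfvw)
  · exact Sum.inl_ne_inr hfvw
  · exact Sum.inr_ne_inl hfvw
  · obtain rfl := Sum.inr_injective hfvw
    have hevw : e.1 = s(v, w) := (Sym2.mem_and_mem_iff hvw).1 ⟨hve, hwe'⟩
    exact hS hv hw hvw (by simpa [hevw] using hF e.2)

lemma eq_of_isDomSet_subdiv_pair_of_mem (hF : ↑F ⊆ G.edgeSet) {x y : V}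
    (hxy : ∀ v, G.Adj x v → ¬ G.Adj y v) (hD : (G.subdiv F).IsDomSet {.inl x, .inl y})
    {e : Sym2 V} (he : e ∈ F) (hxe : x ∈ e) : e = s(x, y) := by
  obtain ⟨v, rfl⟩ := Sym2.mem_iff_exists.1 hxe
  have hxv : G.Adj x v := hF he
  by_contra hne
  have hvy : v ≠ y := by rintro rfl; exact hne rfl
  obtain ⟨d, hd, hadj⟩ := hD (.inl v) (by simp [hvy, hxv.ne'])
  rcases hd with rfl | rfl
  · exact (subdiv_adj_inl_inl.1 hadj).2 he
  · exact hxy v hxv (subdiv_adj_inl_inl.1 hadj).1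

lemma eq_of_isDomSet_subdiv_pair (hF : ↑F ⊆ G.edgeSet) {x y : V}
    (hxy : ∀ v, G.Adj x v → ¬ G.Adj y v) (hD : (G.subdiv F).IsDomSet {.inl x, .inl y})
    {e : Sym2 V} (he : e ∈ F) : e = s(x, y) := by
  obtain ⟨d, hd, hadj⟩ := hD (.inr ⟨e, he⟩) (by simp)
  rcases hd with rfl | rfl
  · exact eq_of_isDomSet_subdiv_pair_of_mem hF hxy hD he (subdiv_adj_inl_inr.1 hadj)
  · rw [Sym2.eq_swap]
    exact eq_of_isDomSet_subdiv_pair_of_mem hF (fun v hyv hxv => hxy v hxv hyv)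
      (Set.pair_comm _ _ ▸ hD) he (subdiv_adj_inl_inr.1 hadj)

lemma IsDomSet.subdiv_pair {x y : V} (hD : G.IsDomSet {x, y}) :
    (G.subdiv {s(x, y)}).IsDomSet {.inl x, .inl y} := by
  rintro (w | ⟨e, he⟩) hw
  · simp only [Set.mem_insert_iff, Set.mem_singleton_iff, Sum.inl.injEq, not_or] at hw
    obtain ⟨u, hu, hadj⟩ := hD w (by simp [hw.1, hw.2])
    refine ⟨.inl u, by rcases hu with rfl | rfl <;> simp, subdiv_adj_inl_inl.2 ⟨hadj, ?_⟩⟩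
    simp [hw.1, hw.2]
  · obtain rfl := Finset.mem_singleton.1 he
    exact ⟨.inl x, by simp, by simp⟩

end Subdivision

section CompleteBipartite

variable {α β : Type*}

lemma isDomSet_completeBipartiteGraph_pair (a : α) (b : β) :
    (completeBipartiteGraph α β).IsDomSet {.inl a, .inr b} := by
  rintro (a' | b') -
  · exact ⟨.inr b, by simp, by simp⟩
  · exact ⟨.inl a, by simp, by simp⟩

lemma domNum_completeBipartiteGraph [Fintype α] [Fintype β] [Nontrivial α] [Nontrivial β] :
    (completeBipartiteGraph α β).domNum = 2 := by
  classical
  refine le_antisymm ?_ (two_le_domNum ?_)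
  · obtain ⟨a⟩ : Nonempty α := inferInstance
    obtain ⟨b⟩ : Nonempty β := inferInstance
    have hD := isDomSet_completeBipartiteGraph_pair a b
    rw [← Finset.coe_pair] at hD
    exact (domNum_le_card hD).trans Finset.card_le_two
  · rintro (a | b)
    · obtain ⟨a', ha'⟩ := exists_ne a
      exact ⟨.inl a', by simpa using ha', by simp⟩
    · obtain ⟨b', hb'⟩ := exists_ne b
      exact ⟨.inr b', by simpa using hb', by simp⟩

variable {F : Finset (Sym2 (α ⊕ β))} {D : Finset ((α ⊕ β) ⊕ {e // e ∈ F})}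

lemma exists_inl_inl_mem_of_isDomSet_subdiv [Fintype β]
    (hF : ↑F ⊆ (completeBipartiteGraph α β).edgeSet)
    (hD : ((completeBipartiteGraph α β).subdiv F).IsDomSet ↑D) (hcard : D.card < Fintype.card β) :
    ∃ a, .inl (.inl a) ∈ D := by
  by_contra! hD_left
  have hright := card_le_card_of_isDomSet_subdiv hF (S := Finset.univ.map .inr) ?_ hD ?_
  · simp only [Finset.card_map, Finset.card_univ] at hright
    omega
  · intro v hv w hw _
    simp only [Finset.coe_map, Set.mem_image, Finset.mem_coe] at hv hw
    obtain ⟨b, -, rfl⟩ := hv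
    obtain ⟨b', -, rfl⟩ := hw
    simp
  · rintro (a | b) v hv hadj
    · exact hD_left a
    · obtain ⟨b', -, rfl⟩ := Finset.mem_map.1 hv
      simp at hadj

lemma exists_inl_inr_mem_of_isDomSet_subdiv [Fintype α]
    (hF : ↑F ⊆ (completeBipartiteGraph α β).edgeSet)
    (hD : ((completeBipartiteGraph α β).subdiv F).IsDomSet ↑D) (hcard : D.card < Fintype.card α) :
    ∃ b, .inl (.inr b) ∈ D := by
  by_contra! hD_right
  have hleft := card_le_card_of_isDomSet_subdiv hF (S := Finset.univ.map .inl) ?_ hD ?_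
  · simp only [Finset.card_map, Finset.card_univ] at hleft
    omega
  · intro v hv w hw _
    simp only [Finset.coe_map, Set.mem_image, Finset.mem_coe] at hv hw
    obtain ⟨a, -, rfl⟩ := hv
    obtain ⟨a', -, rfl⟩ := hw
    simp
  · rintro (a | b) v hv hadj
    · obtain ⟨a', -, rfl⟩ := Finset.mem_map.1 hv
      simp at hadj
    · exact hD_right b

variable [Fintype α] [Fintype β]

lemma two_le_card_of_isDomSet_subdiv (hα : 2 ≤ Fintype.card α) (hβ : 2 ≤ Fintype.card β)
    (hF : ↑F ⊆ (completeBipartiteGraph α β).edgeSet)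
    (hD : ((completeBipartiteGraph α β).subdiv F).IsDomSet ↑D) : 2 ≤ D.card := by
  by_contra! hcard
  obtain ⟨a, ha⟩ := exists_inl_inl_mem_of_isDomSet_subdiv hF hD (by omega)
  obtain ⟨b, hb⟩ := exists_inl_inr_mem_of_isDomSet_subdiv hF hD (by omega)
  exact hcard.not_ge (Finset.one_lt_card.2 ⟨_, ha, _, hb, by simp⟩)

lemma three_le_card_of_isDomSet_subdiv (hα : 3 ≤ Fintype.card α) (hβ : 3 ≤ Fintype.card β)
    (hF : ↑F ⊆ (completeBipartiteGraph α β).edgeSet) (hFcard : F.card = 2)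
    (hD : ((completeBipartiteGraph α β).subdiv F).IsDomSet ↑D) : 3 ≤ D.card := by
  classical
  by_contra! hcard
  obtain ⟨a, ha⟩ := exists_inl_inl_mem_of_isDomSet_subdiv hF hD (by omega)
  obtain ⟨b, hb⟩ := exists_inl_inr_mem_of_isDomSet_subdiv hF hD (by omega)
  have hDab : D = {.inl (.inl a), .inl (.inr b)} :=
    (Finset.eq_of_subset_of_card_le (Finset.insert_subset_iff.2 ⟨ha, by simpa using hb⟩)
      (by rw [Finset.card_pair (by simp)]; omega)).symm
  have hFab : F ⊆ {s(.inl a, .inr b)} := fun e he =>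
    Finset.mem_singleton.2 <| eq_of_isDomSet_subdiv_pair hF (by rintro (_ | _) <;> simp)
      (by simpa [hDab] using hD) he
  have := Finset.card_le_card hFab
  simp only [Finset.card_singleton] at this
  omega

lemma three_le_domNum_subdiv_completeBipartiteGraph (hα : 3 ≤ Fintype.card α)
    (hβ : 3 ≤ Fintype.card β) (hF : ↑F ⊆ (completeBipartiteGraph α β).edgeSet)
    (hFcard : F.card = 2) : 3 ≤ ((completeBipartiteGraph α β).subdiv F).domNum :=
  le_domNum fun _ hD => three_le_card_of_isDomSet_subdiv hα hβ hF hFcard hD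

lemma domNum_subdiv_completeBipartiteGraph_edge (hα : 2 ≤ Fintype.card α)
    (hβ : 2 ≤ Fintype.card β) (a : α) (b : β) :
    ((completeBipartiteGraph α β).subdiv {s(.inl a, .inr b)}).domNum = 2 := by
  classical
  refine le_antisymm ?_ <| le_domNum fun _ hD => two_le_card_of_isDomSet_subdiv hα hβ (by simp) hD
  have hD := (isDomSet_completeBipartiteGraph_pair a b).subdiv_pair
  rw [← Finset.coe_pair] at hD
  exact (domNum_le_card hD).trans Finset.card_le_two

end CompleteBipartite

end SimpleGraph

theorem stmt8 (s t : ℕ) (hs : 3 ≤ s) (hst : s ≤ t) :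
    (completeBipartiteGraph (Fin s) (Fin t)).IsQCritical 2 := by
  have hs' : 3 ≤ Fintype.card (Fin s) := by simpa using hs
  have ht' : 3 ≤ Fintype.card (Fin t) := by simpa using hs.trans hst
  have : Nontrivial (Fin s) := Fin.nontrivial_iff_two_le.2 (by omega)
  have : Nontrivial (Fin t) := Fin.nontrivial_iff_two_le.2 (by omega)
  refine ⟨fun F hF hFcard => ?_, ?_⟩
  · rw [domNum_completeBipartiteGraph]
    exact three_le_domNum_subdiv_completeBipartiteGraph hs' ht' hF hFcard
  · let a : Fin s := ⟨0, by omega⟩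
    let b : Fin t := ⟨0, by omega⟩
    refine ⟨{s(.inl a, .inr b)}, by simp, Finset.card_singleton _, ?_⟩
    rw [domNum_completeBipartiteGraph,
      domNum_subdiv_completeBipartiteGraph_edge (by omega) (by omega) a b]
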